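/- Let 0 ≤ p ≤ 1, let Z = [[1,0],[0,−1]], let E^deph(σ) = (1 − p/2)·σ + (p/2)·ZσZ be the single-qubit partially dephasing channel, and let U be a 2×2 unitary matrix. Then for every real s ≥ 1 and every pair of quantum channels W, M on 2×2 complex matrices satisfying UρU† = s·E^deph(W(ρ)) − (s−1)·M(ρ) for all ρ, one has s − 1 ≥ p/(2−p). (This is the lower-bound direction of Theorem 4; together with the matching feasible decomposition it gives R⁺_deph(U) = p/(2−p).) -/

import Mathlib

open Matrix

/-- A quantum channel (CPTP map) on `d×d` complex matrices: a map admitting a finite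
family of Kraus operators `K i` with `∑ Kᴴ K = 1`. -/
def IsQuantumChannel {d : ℕ} (F : Matrix (Fin d) (Fin d) ℂ → Matrix (Fin d) (Fin d) ℂ) : Prop :=
  ∃ (k : ℕ) (K : Fin k → Matrix (Fin d) (Fin d) ℂ),
    (∑ i, (K i)ᴴ * K i) = 1 ∧ ∀ ρ, F ρ = ∑ i, K i * ρ * (K i)ᴴ

/-- The Pauli Z matrix. -/
def PauliZ : Matrix (Fin 2) (Fin 2) ℂ := !![1, 0; 0, -1]

/-! Apply to both sides of the decomposition the linear functional `N ↦ ⟨vec U| J(N) |vec U⟩`,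
`J(N)` the Choi matrix. For a channel with Kraus operators `Kᵢ` its value at `V` is
`∑ |tr(Kᵢᴴ V)|² ≥ 0`, so the unitary channel gives `(tr UᴴU)² = 4`, the `M`-term is nonnegative,
and dephasing splits the `W`-term as `(1 - p/2) A + (p/2) B` with `A`, `B` the values for `W` at
`U` and `ZU`. As `U` and `ZU` are Hilbert–Schmidt orthogonal of squared norm `2`, Bessel's
inequality gives `A + B ≤ 2 tr (∑ Kᵢᴴ Kᵢ) = 4`. Hence `4 ≤ s ((1 - p/2) A + (p/2) B) ≤ s (4 - 2p)`.
-/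

section Bessel

variable {𝕜 E ι : Type*} [RCLike 𝕜] [NormedAddCommGroup E] [InnerProductSpace 𝕜 E]
  [Fintype ι] [DecidableEq ι]

theorem sum_norm_inner_sq_le_of_inner_eq_ite {v : ι → E} {c : ℝ} (hc : 0 < c)
    (hv : ∀ i j, inner 𝕜 (v i) (v j) = if i = j then (c : 𝕜) else 0) (x : E) :
    ∑ i, ‖inner 𝕜 (v i) x‖ ^ 2 ≤ c * ‖x‖ ^ 2 := by
  set a : 𝕜 := (((√c)⁻¹ : ℝ) : 𝕜)
  have ha : ‖a‖ ^ 2 = c⁻¹ := by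
    simp [a, abs_of_pos (Real.sqrt_pos.2 hc), Real.sq_sqrt hc.le]
  have hortho : Orthonormal 𝕜 fun i => a • v i := by
    rw [orthonormal_iff_ite]
    intro i j
    rw [inner_smul_left, inner_smul_right, hv, ← mul_assoc, RCLike.conj_mul, ← RCLike.ofReal_pow,
      ha]
    split_ifs <;> simp [hc.ne']
  have hbessel := hortho.sum_inner_products_le x (s := Finset.univ)
  simp only [inner_smul_left, norm_mul, RCLike.norm_conj, mul_pow, ha, ← Finset.mul_sum]
    at hbessel
  rwa [inv_mul_le_iff₀ hc] at hbessel

end Bessel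

section HilbertSchmidt

variable {m n : Type*} [Fintype m] [Fintype n]

noncomputable def hsVec (A : Matrix m n ℂ) : EuclideanSpace ℂ (n × m) := WithLp.toLp 2 (vec A)

theorem inner_hsVec (A B : Matrix m n ℂ) : inner ℂ (hsVec A) (hsVec B) = trace (Aᴴ * B) := by
  rw [hsVec, hsVec, EuclideanSpace.inner_toLp_toLp, dotProduct_comm, star_vec_dotProduct_vec]

theorem norm_hsVec_sq (A : Matrix m n ℂ) : ‖hsVec A‖ ^ 2 = (trace (Aᴴ * A)).re := by
  rw [← inner_self_eq_norm_sq (𝕜 := ℂ), inner_hsVec]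
  rfl

end HilbertSchmidt

section Choi

variable {n : Type*} [Fintype n] [DecidableEq n]

/-- `⟨vec V| J(N) |vec V⟩` for the Choi matrix `J(N) = ∑ a b, E_ab ⊗ N(E_ab)` of `N`. -/
noncomputable def choiForm (V : Matrix n n ℂ) : (Matrix n n ℂ → Matrix n n ℂ) →ₗ[ℂ] ℂ where
  toFun N := ∑ a, ∑ b, (Vᴴ * N (single a b 1) * V) a b
  map_add' N N' := by
    simp only [Pi.add_apply, Matrix.mul_add, Matrix.add_mul, Matrix.add_apply,
      Finset.sum_add_distrib]
  map_smul' c N := by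
    simp only [Pi.smul_apply, Matrix.mul_smul, Matrix.smul_mul, Matrix.smul_apply, smul_eq_mul,
      Finset.mul_sum, RingHom.id_apply]

theorem choiForm_apply (V : Matrix n n ℂ) (N : Matrix n n ℂ → Matrix n n ℂ) :
    choiForm V N = ∑ a, ∑ b, (Vᴴ * N (single a b 1) * V) a b := rfl

theorem choiForm_conj (A V : Matrix n n ℂ) (N : Matrix n n ℂ → Matrix n n ℂ) :
    choiForm V (fun ρ => A * N ρ * Aᴴ) = choiForm (Aᴴ * V) N := by
  simp only [choiForm_apply, conjTranspose_mul, conjTranspose_conjTranspose, Matrix.mul_assoc]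

theorem choiForm_id (X : Matrix n n ℂ) :
    choiForm X (fun ρ => ρ) = (‖trace X‖ ^ 2 : ℝ) := by
  have h : ∀ a b, (Xᴴ * single a b (1 : ℂ) * X) a b = star (X a a) * X b b := by
    intro a b
    rw [Matrix.mul_assoc, Matrix.mul_apply, Finset.sum_eq_single a (fun c _ hc => by simp [hc])
      (by simp)]
    simp
  simp only [choiForm_apply, h, ← Finset.mul_sum, ← Finset.sum_mul]
  rw [Complex.ofReal_pow, ← Complex.conj_mul', trace, map_sum]
  rfl

theorem choiForm_of_kraus {ι : Type*} [Fintype ι] {K : ι → Matrix n n ℂ}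
    {N : Matrix n n ℂ → Matrix n n ℂ} (hN : ∀ ρ, N ρ = ∑ i, K i * ρ * (K i)ᴴ)
    (V : Matrix n n ℂ) :
    choiForm V N = ((∑ i, ‖trace ((K i)ᴴ * V)‖ ^ 2 : ℝ) : ℂ) := by
  have hN' : N = ∑ i, fun ρ => K i * ρ * (K i)ᴴ := funext fun ρ => by simp [hN]
  simp [hN', map_sum, choiForm_conj, choiForm_id]

theorem choiForm_unitary {U : Matrix n n ℂ} (hU : U ∈ unitaryGroup n ℂ) :
    choiForm U (fun ρ => U * ρ * Uᴴ) = (Fintype.card n ^ 2 : ℂ) := by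
  have hUU : Uᴴ * U = 1 := mem_unitaryGroup_iff'.mp hU
  rw [choiForm_conj U U fun ρ => ρ, hUU, choiForm_id, trace_one]
  simp

theorem sum_sum_norm_trace_sq_le {ι κ : Type*} [Fintype ι] [Fintype κ] [DecidableEq κ]
    {K : ι → Matrix n n ℂ} (hK : ∑ i, (K i)ᴴ * K i = 1)
    {V : κ → Matrix n n ℂ} {c : ℝ} (hc : 0 < c)
    (hV : ∀ j j', trace ((V j)ᴴ * V j') = if j = j' then (c : ℂ) else 0) :
    ∑ j, ∑ i, ‖trace ((K i)ᴴ * V j)‖ ^ 2 ≤ c * Fintype.card n := by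
  rw [Finset.sum_comm]
  calc ∑ i, ∑ j, ‖trace ((K i)ᴴ * V j)‖ ^ 2 ≤ ∑ i, c * ‖hsVec (K i)‖ ^ 2 := by
        refine Finset.sum_le_sum fun i _ => ?_
        have := sum_norm_inner_sq_le_of_inner_eq_ite hc (v := fun j => hsVec (V j))
          (fun j j' => by rw [inner_hsVec]; exact hV j j') (hsVec (K i))
        refine le_trans (le_of_eq (Finset.sum_congr rfl fun j _ => ?_)) this
        rw [norm_inner_symm, inner_hsVec]
    _ = c * Fintype.card n := by
        simp_rw [norm_hsVec_sq, ← Finset.mul_sum, ← Complex.re_sum, ← trace_sum, hK, trace_one]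
        simp

theorem trace_conjTranspose_mul_mul_unitary (P Q : Matrix n n ℂ) {U : Matrix n n ℂ}
    (hU : U ∈ unitaryGroup n ℂ) : trace ((P * U)ᴴ * (Q * U)) = trace (Pᴴ * Q) := by
  have hUU : U * Uᴴ = 1 := mem_unitaryGroup_iff.mp hU
  rw [conjTranspose_mul, Matrix.mul_assoc, trace_mul_comm, Matrix.mul_assoc, Matrix.mul_assoc,
    hUU, Matrix.mul_one]

end Choi

theorem pauliZ_conjTranspose : PauliZᴴ = PauliZ := by
  ext i j; fin_cases i <;> fin_cases j <;> simp [PauliZ]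

theorem trace_conjTranspose_mul_one_pauliZ (j j' : Fin 2) :
    trace ((![1, PauliZ] j)ᴴ * ![1, PauliZ] j') = if j = j' then 2 else 0 := by
  fin_cases j <;> fin_cases j' <;> norm_num [PauliZ, trace, Fin.sum_univ_two, Matrix.mul_apply]

theorem sub_one_ge_of_choi_identity {p s A B C : ℝ} (hp1 : p ≤ 1) (hs : 1 ≤ s) (hB : 0 ≤ B)
    (hC : 0 ≤ C) (hAB : A + B ≤ 4) (h : 4 = s * ((1 - p / 2) * A + p / 2 * B) - (s - 1) * C) :
    s - 1 ≥ p / (2 - p) := by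
  have hX : (1 - p / 2) * A + p / 2 * B ≤ 4 - 2 * p := by
    nlinarith [mul_nonneg (sub_nonneg.2 hp1) hB]
  have h4 : 4 ≤ s * (4 - 2 * p) := by
    nlinarith [mul_le_mul_of_nonneg_left hX (by linarith : (0 : ℝ) ≤ s),
      mul_nonneg (sub_nonneg.2 hs) hC]
  rw [ge_iff_le, div_le_iff₀ (by linarith)]
  linarith

theorem dephasing_robustness_lower_bound_general
    (p : ℝ) (hp1 : p ≤ 1)
    (E : Matrix (Fin 2) (Fin 2) ℂ → Matrix (Fin 2) (Fin 2) ℂ)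
    (hE : ∀ σ, E σ = ((1 - p / 2 : ℝ) : ℂ) • σ + ((p / 2 : ℝ) : ℂ) • (PauliZ * σ * PauliZ))
    (U : Matrix (Fin 2) (Fin 2) ℂ) (hU : U ∈ Matrix.unitaryGroup (Fin 2) ℂ)
    (s : ℝ) (hs : 1 ≤ s)
    (W M : Matrix (Fin 2) (Fin 2) ℂ → Matrix (Fin 2) (Fin 2) ℂ)
    (hW : IsQuantumChannel W) (hM : IsQuantumChannel M)
    (hdecomp : ∀ ρ, U * ρ * Uᴴ = (s : ℂ) • E (W ρ) - ((s : ℂ) - 1) • M ρ) :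
    s - 1 ≥ p / (2 - p) := by
  obtain ⟨k, K, hK, hWK⟩ := hW
  obtain ⟨l, L, -, hML⟩ := hM
  set A := ∑ i, ‖trace ((K i)ᴴ * U)‖ ^ 2
  set B := ∑ i, ‖trace ((K i)ᴴ * (PauliZ * U))‖ ^ 2
  set C := ∑ i, ‖trace ((L i)ᴴ * U)‖ ^ 2
  have hAB : A + B ≤ 4 := by
    have := sum_sum_norm_trace_sq_le hK (V := fun j => ![1, PauliZ] j * U) two_pos
      fun j j' => by
        rw [trace_conjTranspose_mul_mul_unitary _ _ hU, trace_conjTranspose_mul_one_pauliZ]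
        push_cast; rfl
    simpa [Fin.sum_univ_two, A, B, show (2 : ℝ) * 2 = 4 by norm_num] using this
  have hchoi : (4 : ℝ) = s * ((1 - p / 2) * A + p / 2 * B) - (s - 1) * C := by
    have hfun : (fun ρ => U * ρ * Uᴴ) = (s : ℂ) • (((1 - p / 2 : ℝ) : ℂ) • W
        + ((p / 2 : ℝ) : ℂ) • fun ρ => PauliZ * W ρ * PauliZᴴ) - ((s : ℂ) - 1) • M :=
      funext fun ρ => by simp [hdecomp, hE, pauliZ_conjTranspose]
    have h := congrArg (choiForm U) hfun
    rw [choiForm_unitary hU] at h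
    simp only [map_sub, map_smul, map_add, choiForm_conj] at h
    rw [pauliZ_conjTranspose, choiForm_of_kraus hWK, choiForm_of_kraus hWK,
      choiForm_of_kraus hML] at h
    simp only [smul_eq_mul, Fintype.card_fin] at h
    exact_mod_cast h
  exact sub_one_ge_of_choi_identity hp1 hs (by positivity) (by positivity) hAB hchoi

/-- Theorem 4 (lower-bound direction): for the single-qubit partially dephasing channel
`E^deph(σ) = (1 − p/2)·σ + (p/2)·ZσZ` and a `2×2` unitary `U`, every decomposition
`UρU† = s·E^deph(W(ρ)) − (s−1)·M(ρ)` with `s ≥ 1` and `W, M` quantum channels satisfies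
`s − 1 ≥ p/(2−p)`. -/
theorem dephasing_robustness_lower_bound
    (p : ℝ) (hp0 : 0 ≤ p) (hp1 : p ≤ 1)
    (E : Matrix (Fin 2) (Fin 2) ℂ → Matrix (Fin 2) (Fin 2) ℂ)
    (hE : ∀ σ, E σ = ((1 - p / 2 : ℝ) : ℂ) • σ + ((p / 2 : ℝ) : ℂ) • (PauliZ * σ * PauliZ))
    (U : Matrix (Fin 2) (Fin 2) ℂ) (hU : U ∈ Matrix.unitaryGroup (Fin 2) ℂ)
    (s : ℝ) (hs : 1 ≤ s)
    (W M : Matrix (Fin 2) (Fin 2) ℂ → Matrix (Fin 2) (Fin 2) ℂ)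
    (hW : IsQuantumChannel W) (hM : IsQuantumChannel M)
    (hdecomp : ∀ ρ, U * ρ * Uᴴ = (s : ℂ) • E (W ρ) - ((s : ℂ) - 1) • M ρ) :
    s - 1 ≥ p / (2 - p) :=
  dephasing_robustness_lower_bound_general p hp1 E hE U hU s hs W M hW hM hdecomp
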